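/- The set NO of normal-order contexts is not closed under composition: for any term N and distinct variables x, y, the contexts λx.(□ N) and λy.□ both belong to NO, but their composition λx.((λy.□) N) does not belong to NO. Hence normal order is a hybrid strategy. -/
import Mathlib


/-- Pure λ-calculus terms (de Bruijn representation). -/
inductive Tm : Type
  | var : Nat → Tm
  | lam : Tm → Tm
  | app : Tm → Tm → Tm
deriving DecidableEq

/-- Shift the free variables (those ≥ `c`) of a term up by one. -/
def lift (c : Nat) : Tm → Tm
  | .var n => if n < c then .var n else .var (n + 1)
  | .lam b => .lam (lift (c + 1) b)
  | .app m n => .app (lift c m) (lift c n)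

/-- Capture-avoiding substitution `[N/k]B` (de Bruijn). -/
def subst (N : Tm) (k : Nat) : Tm → Tm
  | .var n => if n < k then .var n else if n = k then N else .var (n - 1)
  | .lam b => .lam (subst (lift 0 N) (k + 1) b)
  | .app m n => .app (subst N k m) (subst N k n)
/-- One-hole contexts of the pure λ-calculus. -/
inductive Ctx : Type
  | hole : Ctx
  | lam : Ctx → Ctx
  | appL : Ctx → Tm → Ctx
  | appR : Tm → Ctx → Ctx

/-- Composition of contexts: `C1.comp C2` replaces the hole of `C1` by `C2`. -/
def Ctx.comp : Ctx → Ctx → Ctx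
  | .hole, D => D
  | .lam C, D => .lam (Ctx.comp C D)
  | .appL C M, D => .appL (Ctx.comp C D) M
  | .appR M C, D => .appR M (Ctx.comp C D)
mutual
  /-- Normal forms: NF ::= λx.NF | x F1 … Fn with each Fi ∈ NF. -/
  inductive Nf : Tm → Prop
    | lam : ∀ B, Nf B → Nf (.lam B)
    | ne : ∀ M, NeNf M → Nf M
  /-- Neutral normal forms: x F1 … Fn with each Fi ∈ NF. -/
  inductive NeNf : Tm → Prop
    | var : ∀ n, NeNf (.var n)
    | app : ∀ M N, NeNf M → Nf N → NeNf (.app M N)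
end
/-- `x F1 … Fm` as a term: a variable applied to a list of terms. -/
def appVar (x : Nat) (fs : List Tm) : Tm := fs.foldl Tm.app (Tm.var x)

/-- `C N1 … Nk` as a context: a context applied to a list of terms. -/
def ctxApps (C : Ctx) (l : List Tm) : Ctx := l.foldl Ctx.appL C

/-- Normal-order contexts, generated by the uniform-style grammar
    NO ::= □ M1 … Mk | λx.NO | x F1 … Fm C N1 … Nk  (C ∈ NO, each Fi ∈ NF). -/
inductive NOC : Ctx → Prop
  | holeApps : ∀ l : List Tm, NOC (ctxApps .hole l)
  | lam : ∀ C, NOC C → NOC (.lam C)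
  | neu : ∀ (x : Nat) (fs : List Tm) (C : Ctx) (l : List Tm),
      (∀ F ∈ fs, Nf F) → NOC C → NOC (ctxApps (.appR (appVar x fs) C) l)


lemma ctxApps_append (C : Ctx) (l : List Tm) (a : Tm) :
    ctxApps C (l ++ [a]) = .appL (ctxApps C l) a := by
  simp [ctxApps, List.foldl_append]

lemma ctxApps_ne_lam (l : List Tm) (C0 : Ctx)
    (h : C0 = .hole ∨ ∃ a b, C0 = .appR a b) (D : Ctx) :
    ctxApps C0 l ≠ .lam D := by
  induction l using List.reverseRecOn with
  | nil =>
    rcases h with h | ⟨a, b, h⟩ <;> subst h <;> simp [ctxApps]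
  | append_singleton l a ih =>
    rw [ctxApps_append]; simp

lemma ctxApps_ne_appL_lam (l : List Tm) (C0 : Ctx)
    (h : C0 = .hole ∨ ∃ a b, C0 = .appR a b) (D : Ctx) (M : Tm) :
    ctxApps C0 l ≠ .appL (.lam D) M := by
  induction l using List.reverseRecOn with
  | nil =>
    rcases h with h | ⟨a, b, h⟩ <;> subst h <;> simp [ctxApps]
  | append_singleton l a ih =>
    rw [ctxApps_append]
    intro heq
    injection heq with h1 h2
    exact ctxApps_ne_lam l C0 h D h1

lemma noc_not_appL_lam {C : Ctx} (h : NOC C) (D : Ctx) (M : Tm) :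
    C ≠ .appL (.lam D) M := by
  cases h with
  | holeApps l => exact ctxApps_ne_appL_lam l _ (Or.inl rfl) _ _
  | lam C hC => simp
  | neu x fs C l hfs hC => exact ctxApps_ne_appL_lam l _ (Or.inr ⟨_, _, rfl⟩) _ _

lemma noc_inv_lam {C : Ctx} (h : NOC C) (D : Ctx) (hD : C = .lam D) : NOC D := by
  cases h with
  | holeApps l => exact absurd hD (ctxApps_ne_lam l _ (Or.inl rfl) _)
  | lam C hC => injection hD with h1; exact h1 ▸ hC
  | neu x fs C l hfs hC => exact absurd hD (ctxApps_ne_lam l _ (Or.inr ⟨_, _, rfl⟩) _)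

/-- Normal-order contexts are not closed under composition:
    `λx.(□ N)` and `λy.□` are normal-order contexts, but their
    composition `λx.((λy.□) N)` is not.  Hence normal order is hybrid. -/
theorem no_not_closed_under_composition (N : Tm) :
    NOC (.lam (.appL .hole N)) ∧ NOC (.lam .hole) ∧
      ¬ NOC ((Ctx.lam (Ctx.appL Ctx.hole N)).comp (Ctx.lam Ctx.hole)) := by
  refine ⟨NOC.lam _ (by simpa [ctxApps] using NOC.holeApps [N]),
    NOC.lam _ (by simpa [ctxApps] using NOC.holeApps []), ?_⟩
  intro h
  simp only [Ctx.comp] at h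
  exact noc_not_appL_lam (noc_inv_lam h _ rfl) _ _ rfl
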